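/- arXiv:1709.08139 — 2 statements merged into one kernel-verified Lean document; each statement's English description precedes it below -/
import Mathlib

section
/- Let W be an n×n row-stochastic, irreducible, aperiodic matrix with stationary distribution π and mean first passage time matrix (m_{ij}), satisfying rational selfishness at node r. Let W̃ be the single-edge perturbation of W by edge (r,c) with weight θ, assumed irreducible and aperiodic, with stationary distribution π̃. Then for every state j with j ≠ r and j ≠ c, π̃_j = π_j · [ 1 − θ·π̃_r·(m_{cj} − m_{rj} + 1) ]. -/
/-!
Let `u` be the `j`-th column of the mean first passage times with its `j`-th entry set to `0`.
The one-hop equations say `W u = m_{·j} - 1`, hence `(I - W) u = 1 - m_{jj} e_j`, so every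
probability vector `x` satisfies `x (I - W) u = 1 - x_j m_{jj}`. For `x = π` the left side
vanishes, which is Kac's formula `π_j m_{jj} = 1`. For `x = π̃` the perturbation gives
`π̃ (I - W) = θ π̃_r (e_c - W_r)`, so the left side is `θ π̃_r (m_{cj} - m_{rj} + 1)`; dividing the
two identities yields the theorem.
-/

open Matrix Finset Filter

/-- `W` is row-stochastic: nonnegative entries, each row sums to 1. -/
def RowStochastic {n : ℕ} (W : Matrix (Fin n) (Fin n) ℝ) : Prop :=
  (∀ i j, 0 ≤ W i j) ∧ ∀ i, ∑ j, W i j = 1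

/-- `W` is irreducible and aperiodic, i.e. primitive: some power has all entries positive. -/
def Primitive {n : ℕ} (W : Matrix (Fin n) (Fin n) ℝ) : Prop :=
  ∃ N : ℕ, ∀ i j, 0 < (W ^ N) i j

/-- `π` is the stationary distribution of `W`: positive entries, summing to 1, `πᵀ W = πᵀ`. -/
def IsStationaryDist {n : ℕ} (W : Matrix (Fin n) (Fin n) ℝ) (π : Fin n → ℝ) : Prop :=
  (∀ i, 0 < π i) ∧ (∑ i, π i = 1) ∧ π ᵥ* W = π

/-- `M` is a mean first passage time matrix of `W`: positive entries satisfying the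
one-hop conditioning equations `m i j = 1 + ∑_{k ≠ j} w i k * m k j`. -/
def IsMFPT {n : ℕ} (W M : Matrix (Fin n) (Fin n) ℝ) : Prop :=
  (∀ i j, 0 < M i j) ∧ ∀ i j, M i j = 1 + ∑ k, if k ≠ j then W i k * M k j else 0

/-- The single-edge perturbation `W̃ = W − θ·diag(e r)·W + θ·(e r)(e c)ᵀ` of `W` by the
directed edge `(r, c)` with weight `θ`: row `r` of `W` is multiplied by `1 − θ` and `θ`
is added in entry `(r, c)`. -/
def EdgePerturb {n : ℕ} (W : Matrix (Fin n) (Fin n) ℝ) (r c : Fin n) (θ : ℝ) :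
    Matrix (Fin n) (Fin n) ℝ :=
  Matrix.of fun i j => if i = r then (1 - θ) * W i j + (if j = c then θ else 0) else W i j

namespace IsMFPT

variable {n : ℕ} {W M : Matrix (Fin n) (Fin n) ℝ}

theorem mulVec_update_col (hM : IsMFPT W M) (j : Fin n) :
    W *ᵥ Function.update (fun k => M k j) j 0 = fun i => M i j - 1 := by
  funext i
  rw [hM.2 i j, add_sub_cancel_left, mulVec, dotProduct]
  refine Finset.sum_congr rfl fun k _ => ?_
  by_cases hk : k = j <;> simp [hk]

theorem one_sub_mulVec_update_col (hM : IsMFPT W M) (j : Fin n) :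
    (1 - W) *ᵥ Function.update (fun k => M k j) j 0 = 1 - Pi.single j (M j j) := by
  funext i
  rw [sub_mulVec, one_mulVec, hM.mulVec_update_col]
  by_cases hi : i = j
  · subst hi; simp
  · simp [hi]

theorem vecMul_one_sub_dotProduct_update_col (hM : IsMFPT W M) (j : Fin n) {x : Fin n → ℝ}
    (hx : ∑ i, x i = 1) :
    (x ᵥ* (1 - W)) ⬝ᵥ Function.update (fun k => M k j) j 0 = 1 - x j * M j j := by
  rw [← dotProduct_mulVec, hM.one_sub_mulVec_update_col, dotProduct_sub, dotProduct_single,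
    dotProduct_one, hx]

end IsMFPT

theorem IsStationaryDist.mul_mfpt_self {n : ℕ} {W M : Matrix (Fin n) (Fin n) ℝ}
    {π : Fin n → ℝ} (hπ : IsStationaryDist W π) (hM : IsMFPT W M) (j : Fin n) :
    π j * M j j = 1 := by
  have h := hM.vecMul_one_sub_dotProduct_update_col j hπ.2.1
  rw [vecMul_sub, vecMul_one, hπ.2.2, sub_self, zero_dotProduct] at h
  linarith

theorem edgePerturb_eq_add_vecMulVec {n : ℕ} (W : Matrix (Fin n) (Fin n) ℝ) (r c : Fin n)
    (θ : ℝ) :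
    EdgePerturb W r c θ = W + θ • vecMulVec (Pi.single r 1) (Pi.single c 1 - W r) := by
  ext i k
  by_cases hi : i = r
  · subst hi; by_cases hk : k = c <;> simp [EdgePerturb, vecMulVec_apply, hk] <;> ring
  · simp [EdgePerturb, vecMulVec_apply, hi]

theorem vecMul_edgePerturb {n : ℕ} (W : Matrix (Fin n) (Fin n) ℝ) (r c : Fin n) (θ : ℝ)
    (x : Fin n → ℝ) :
    x ᵥ* EdgePerturb W r c θ = x ᵥ* W + (θ * x r) • (Pi.single c 1 - W r) := by
  rw [edgePerturb_eq_add_vecMulVec, vecMul_add, vecMul_smul, vecMul_vecMulVec,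
    dotProduct_single_one, smul_smul]

theorem IsStationaryDist.vecMul_one_sub_of_edgePerturb {n : ℕ} {W : Matrix (Fin n) (Fin n) ℝ}
    {r c : Fin n} {θ : ℝ} {π' : Fin n → ℝ} (hπ' : IsStationaryDist (EdgePerturb W r c θ) π') :
    π' ᵥ* (1 - W) = (θ * π' r) • (Pi.single c 1 - W r) := by
  have h := hπ'.2.2
  rw [vecMul_edgePerturb] at h
  rw [vecMul_sub, vecMul_one]
  nth_rewrite 1 [← h]
  abel

theorem single_edge_perturbation_other_general {n : ℕ}
    (W : Matrix (Fin n) (Fin n) ℝ) (π : Fin n → ℝ) (M : Matrix (Fin n) (Fin n) ℝ)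
    (hπ : IsStationaryDist W π) (hM : IsMFPT W M)
    (r c : Fin n) (θ : ℝ) (π' : Fin n → ℝ)
    (hπ' : IsStationaryDist (EdgePerturb W r c θ) π') :
    ∀ j, j ≠ r → j ≠ c →
      π' j = π j * (1 - θ * π' r * (M c j - M r j + 1)) := by
  intro j _ hjc
  have hkac := hπ.mul_mfpt_self hM j
  have hpert : π' j * M j j = 1 - θ * π' r * (M c j - M r j + 1) := by
    have h := hM.vecMul_one_sub_dotProduct_update_col j hπ'.2.1
    rw [hπ'.vecMul_one_sub_of_edgePerturb, smul_dotProduct, sub_dotProduct, single_one_dotProduct,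
      Function.update_of_ne hjc.symm, ← mulVec, hM.mulVec_update_col] at h
    simp only [smul_eq_mul] at h
    linarith
  linear_combination π j * hpert - π' j * hkac

/-- For every state `j ≠ r, c`,
`π̃ j = π j · (1 − θ · π̃ r · (m c j − m r j + 1))`. -/
theorem single_edge_perturbation_other {n : ℕ}
    (W : Matrix (Fin n) (Fin n) ℝ) (π : Fin n → ℝ) (M : Matrix (Fin n) (Fin n) ℝ)
    (hW : RowStochastic W) (hprim : Primitive W) (hπ : IsStationaryDist W π) (hM : IsMFPT W M)
    (r c : Fin n) (hrc : r ≠ c) (hWrc : W r c = 0)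
    (θ : ℝ) (hθ0 : 0 < θ) (hθ1 : θ ≤ 1)
    (hself : ∀ j, j ≠ r → W r j < W r r)
    (π' : Fin n → ℝ) (hprim' : Primitive (EdgePerturb W r c θ))
    (hπ' : IsStationaryDist (EdgePerturb W r c θ) π') :
    ∀ j, j ≠ r → j ≠ c →
      π' j = π j * (1 - θ * π' r * (M c j - M r j + 1)) :=
  single_edge_perturbation_other_general W π M hπ hM r c θ π' hπ'
end

section
/- (Correctness of the reduction kSSP ∝ DIVER.) Let n ≥ 2, z ∈ [0,1]^n, s ∈ [0,1], 1 ≤ k ≤ n. Let G_kc be the complete graph on 2n vertices minus the perfect matching C = {(2ℓ−1, 2ℓ) : ℓ = 1,…,n}, with m edges and eigenvector centrality π of its uniformly weighted matrix; set x̃ = z ⊗ 𝟙₂ and x = (s·𝟙 + m·x̃)/(m + k). Then min over subsets S ⊆ C with |S| = k of |⟨π̃(S), x̃⟩ − ⟨π, x⟩| equals 0 if and only if there exists a subset T ⊆ {1,…,n} with |T| = k and Σ_{ℓ∈T} z_ℓ = s, where π̃(S) is the eigenvector centrality of the uniformly weighted matrix of G_kc with the k edges S added. -/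
open Finset

/-- The graph `G_kc` on `2n` vertices: the complete graph `K_{2n}` minus the perfect
matching `C = {(2ℓ, 2ℓ+1) : ℓ = 0,…,n−1}` (vertices `2ℓ` and `2ℓ+1` are partners). -/
def Gkc (n : ℕ) : SimpleGraph (Fin (2 * n)) where
  Adj i j := i ≠ j ∧ (i : ℕ) / 2 ≠ (j : ℕ) / 2
  symm := ⟨by rintro i j ⟨h1, h2⟩; exact ⟨h1.symm, h2.symm⟩⟩
  loopless := ⟨by rintro i ⟨h1, _⟩; exact h1 rfl⟩

/-- `G_kc` with the matching edges `{(2ℓ, 2ℓ+1) : ℓ ∈ T}` added. -/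
def GkcAdd (n : ℕ) (T : Finset (Fin n)) : SimpleGraph (Fin (2 * n)) where
  Adj i j := i ≠ j ∧
    ((i : ℕ) / 2 ≠ (j : ℕ) / 2 ∨ ∃ ℓ ∈ T, (i : ℕ) / 2 = (ℓ : ℕ) ∧ (j : ℕ) / 2 = (ℓ : ℕ))
  symm := ⟨by
    rintro i j ⟨h1, h2⟩
    refine ⟨h1.symm, ?_⟩
    rcases h2 with h2 | ⟨ℓ, hl, ha, hb⟩
    · exact Or.inl h2.symm
    · exact Or.inr ⟨ℓ, hl, hb, ha⟩⟩
  loopless := ⟨by rintro i ⟨h1, _⟩; exact h1 rfl⟩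

noncomputable instance (n : ℕ) : DecidableRel (Gkc n).Adj := Classical.decRel _

noncomputable instance (n : ℕ) (T : Finset (Fin n)) :
    DecidableRel (GkcAdd n T).Adj := Classical.decRel _

/-- The Kronecker product `z ⊗ 𝟙₂ : ℝ^{2n}`, duplicating each entry of `z` twice. -/
def dupVec {n : ℕ} (z : Fin n → ℝ) : Fin (2 * n) → ℝ :=
  fun v => z ⟨(v : ℕ) / 2, by have := v.isLt; omega⟩

/-!
Adding the `k` edges of `S` raises the degree of exactly the `2k` endpoints of `S` by one
and `m` to `m + k`. With `Σ_v d(v) = 2m`, the choice `x = (s·𝟙 + m·x̃)/(m + k)` makes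
`⟨π, x⟩ = (s + ½⟨d, x̃⟩)/(m + k)`, while `⟨π̃(S), x̃⟩ = (⟨d, x̃⟩ + ⟨d̃ − d, x̃⟩)/(2(m + k))`.
So the objective at `S` is `|Σ_{ℓ ∈ S} z_ℓ − s|/(m + k)`, which vanishes exactly when the
`k` entries of `z` indexed by `S` sum to `s`.
-/

theorem Finset.inf'_eq_iff_exists_eq_of_le {ι α : Type*} [LinearOrder α] {s : Finset ι}
    (hs : s.Nonempty) {f : ι → α} {c : α} (hc : ∀ i ∈ s, c ≤ f i) :
    s.inf' hs f = c ↔ ∃ i ∈ s, f i = c := by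
  obtain ⟨i, hi, hinf⟩ := s.exists_mem_eq_inf' hs f
  refine ⟨fun h => ⟨i, hi, hinf ▸ h⟩, ?_⟩
  rintro ⟨j, hj, hfj⟩
  exact le_antisymm (hfj ▸ s.inf'_le f hj) (s.le_inf' hs f hc)

theorem diver_gap_eq {ι : Type*} [Fintype ι] (d d' x' : ι → ℝ) (m k s : ℝ) (hm : m ≠ 0)
    (hd : ∑ i, d i = 2 * m) :
    ∑ i, d' i / (2 * (m + k)) * x' i - ∑ i, d i / (2 * m) * ((s * 1 + m * x' i) / (m + k)) =
      (∑ i, (d' i - d i) * x' i / 2 - s) / (m + k) := by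
  have hπx : ∑ i, d i / (2 * m) * ((s * 1 + m * x' i) / (m + k)) =
      (s * (∑ i, d i) / (2 * m) + ∑ i, d i * x' i / 2) / (m + k) := by
    simp only [mul_sum, sum_div, ← sum_add_distrib]
    refine sum_congr rfl fun i _ => ?_
    field_simp
  have hπ'x : ∑ i, d' i / (2 * (m + k)) * x' i = (∑ i, d' i * x' i / 2) / (m + k) := by
    rw [sum_div]
    exact sum_congr rfl fun i _ => by rw [mul_comm 2, ← div_div]; ring
  have hgap : ∑ i, (d' i - d i) * x' i / 2 = ∑ i, d' i * x' i / 2 - ∑ i, d i * x' i / 2 := by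
    simp only [sub_mul, sub_div, sum_sub_distrib]
  rw [hπx, hπ'x, hgap, hd, mul_div_cancel_right₀ s (mul_ne_zero two_ne_zero hm)]
  ring

section Gkc

variable {n : ℕ}

/-- The index `ℓ` of the matching edge `(2ℓ, 2ℓ+1)` containing a vertex. -/
def pairIdx (v : Fin (2 * n)) : Fin n :=
  ⟨(v : ℕ) / 2, by omega⟩

theorem dupVec_apply (z : Fin n → ℝ) (v : Fin (2 * n)) : dupVec z v = z (pairIdx v) :=
  rfl

theorem card_filter_pairIdx_eq (ℓ : Fin n) :
    #{v : Fin (2 * n) | pairIdx v = ℓ} = 2 := by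
  have hfiber : ({v : Fin (2 * n) | pairIdx v = ℓ} : Finset _) =
      {⟨2 * ℓ, by omega⟩, ⟨2 * ℓ + 1, by omega⟩} := by
    ext v
    simp only [mem_filter, mem_univ, true_and, mem_insert, mem_singleton, Fin.ext_iff,
      pairIdx]
    omega
  rw [hfiber, card_pair (by simp [Fin.ext_iff])]

theorem sum_comp_pairIdx {M : Type*} [AddCommMonoid M] (f : Fin n → M) :
    ∑ v : Fin (2 * n), f (pairIdx v) = 2 • ∑ ℓ, f ℓ := by
  rw [← sum_fiberwise' univ pairIdx f, smul_sum]
  simp only [sum_const, card_filter_pairIdx_eq]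

theorem gkc_adj_iff (v w : Fin (2 * n)) : (Gkc n).Adj v w ↔ pairIdx v ≠ pairIdx w := by
  simp only [Gkc, pairIdx, ne_eq, Fin.ext_iff]
  omega

theorem gkcAdd_adj_iff (T : Finset (Fin n)) (v w : Fin (2 * n)) :
    (GkcAdd n T).Adj v w ↔
      (Gkc n).Adj v w ∨ v ≠ w ∧ pairIdx v = pairIdx w ∧ pairIdx v ∈ T := by
  constructor
  · rintro ⟨hne, hpair | ⟨ℓ, hℓ, hv, hw⟩⟩
    · exact Or.inl ⟨hne, hpair⟩
    · have hvℓ : pairIdx v = ℓ := Fin.ext hv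
      exact Or.inr ⟨hne, hvℓ.trans (Fin.ext hw).symm, hvℓ ▸ hℓ⟩
  · rintro (⟨hne, hpair⟩ | ⟨hne, hpair, hT⟩)
    · exact ⟨hne, Or.inl hpair⟩
    · exact ⟨hne, Or.inr ⟨_, hT, rfl, congrArg Fin.val hpair.symm⟩⟩

theorem degree_gkc (v : Fin (2 * n)) : (Gkc n).degree v = 2 * n - 2 := by
  have hnbr : (Gkc n).neighborFinset v = ({w | ¬pairIdx w = pairIdx v} : Finset _) := by
    ext w
    simp [gkc_adj_iff, eq_comm]
  rw [← SimpleGraph.card_neighborFinset_eq_degree, hnbr, filter_not, card_sdiff_of_subset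
    (filter_subset _ _), card_filter_pairIdx_eq, card_univ, Fintype.card_fin]

theorem degree_gkcAdd (T : Finset (Fin n)) (v : Fin (2 * n)) :
    (GkcAdd n T).degree v = (Gkc n).degree v + if pairIdx v ∈ T then 1 else 0 := by
  rw [← SimpleGraph.card_neighborFinset_eq_degree, ← SimpleGraph.card_neighborFinset_eq_degree]
  split_ifs with hT
  · have hnbr : (GkcAdd n T).neighborFinset v = univ.erase v := by
      ext w
      simp only [SimpleGraph.mem_neighborFinset, gkcAdd_adj_iff, gkc_adj_iff, hT, mem_erase,
        mem_univ, and_true]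
      refine ⟨fun hadj => ?_, fun hwv => ?_⟩
      · rintro rfl
        simp at hadj
      · by_cases hpair : pairIdx v = pairIdx w
        exacts [Or.inr ⟨hwv.symm, hpair⟩, Or.inl hpair]
    rw [hnbr, card_erase_of_mem (mem_univ v), SimpleGraph.card_neighborFinset_eq_degree,
      degree_gkc, card_univ, Fintype.card_fin]
    have := v.isLt
    omega
  · rw [add_zero]
    congr 1
    ext w
    simp [SimpleGraph.mem_neighborFinset, gkcAdd_adj_iff, hT]

theorem edgeFinset_gkc_nonempty (hn : 2 ≤ n) : (Gkc n).edgeFinset.Nonempty :=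
  ⟨s(⟨0, by omega⟩, ⟨2, by omega⟩), SimpleGraph.mem_edgeFinset.2 <|
    (gkc_adj_iff _ _).2 (by simp [pairIdx, Fin.ext_iff])⟩

theorem sum_degree_gkcAdd_sub_degree_gkc_mul_dupVec (T : Finset (Fin n)) (z : Fin n → ℝ) :
    ∑ v, (((GkcAdd n T).degree v : ℝ) - (Gkc n).degree v) * dupVec z v / 2 = ∑ ℓ ∈ T, z ℓ := by
  have hterm : ∀ v, (((GkcAdd n T).degree v : ℝ) - (Gkc n).degree v) * dupVec z v / 2 =
      if pairIdx v ∈ T then z (pairIdx v) / 2 else 0 := by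
    intro v
    rw [degree_gkcAdd, dupVec_apply]
    split_ifs <;> push_cast <;> ring
  rw [sum_congr rfl fun v _ => hterm v,
    sum_comp_pairIdx fun ℓ => if ℓ ∈ T then z ℓ / 2 else 0, sum_ite_mem,
    univ_inter, ← sum_div, nsmul_eq_mul, Nat.cast_two, mul_div_cancel₀ _ two_ne_zero]

end Gkc

/-- Correctness of the reduction kSSP ∝ DIVER. The minimum of the
DIVER objective over all `k`-subsets `S` of the matching `C` (encoded as `k`-subsets `T`
of `{1,…,n}`) is `0` iff some `k` of the `z ℓ` sum to `s`. -/
theorem kssp_diver_reduction (n : ℕ) (hn : 2 ≤ n)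
    (z : Fin n → ℝ)
    (s : ℝ)
    (k : ℕ) (hkn : k ≤ n) :
    letI m : ℝ := ((Gkc n).edgeFinset.card : ℝ)
    letI π : Fin (2 * n) → ℝ := fun v => ((Gkc n).degree v : ℝ) / (2 * m)
    letI x' : Fin (2 * n) → ℝ := dupVec z
    letI x : Fin (2 * n) → ℝ := fun v => (s * 1 + m * x' v) / (m + k)
    ((Finset.univ : Finset (Fin n)).powersetCard k).inf'
        (by
          rw [Finset.powersetCard_nonempty]
          simpa using hkn)
        (fun T =>
          |(∑ v, (((GkcAdd n T).degree v : ℝ) / (2 * (m + k))) * x' v) -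
            (∑ v, π v * x v)|) = 0 ↔
      ∃ T : Finset (Fin n), T.card = k ∧ ∑ ℓ ∈ T, z ℓ = s := by
  beta_reduce
  have hdegrees : ∑ v, ((Gkc n).degree v : ℝ) = 2 * (Gkc n).edgeFinset.card :=
    mod_cast (Gkc n).sum_degrees_eq_twice_card_edges
  set m : ℝ := ((Gkc n).edgeFinset.card : ℝ)
  have hm : 0 < m := Nat.cast_pos.2 (edgeFinset_gkc_nonempty hn).card_pos
  have hmk : 0 < m + k := add_pos_of_pos_of_nonneg hm k.cast_nonneg
  have hobjective : ∀ T ∈ univ.powersetCard k,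
      |∑ v, ((GkcAdd n T).degree v : ℝ) / (2 * (m + k)) * dupVec z v -
          ∑ v, ((Gkc n).degree v : ℝ) / (2 * m) * ((s * 1 + m * dupVec z v) / (m + k))| =
        |∑ ℓ ∈ T, z ℓ - s| / (m + k) := by
    intro T _
    rw [diver_gap_eq _ _ _ _ _ _ hm.ne' hdegrees,
      sum_degree_gkcAdd_sub_degree_gkc_mul_dupVec, abs_div, abs_of_pos hmk]
  rw [inf'_congr _ rfl hobjective, inf'_eq_iff_exists_eq_of_le _ fun T _ => by positivity]
  simp [div_eq_zero_iff, hmk.ne', sub_eq_zero]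
end
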